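/- arXiv:1208.4455 — 7 statements merged into one kernel-verified Lean document; each statement's English description precedes it below -/
import Mathlib

section
/- The set of neighbours of the alternating permutation code equals the set of neighbours of the full symmetric permutation code: Γ₁(C(A_q)) = Γ₁(C(S_q)). -/
def permCode {q : ℕ} (T : Set (Equiv.Perm (Fin q))) : Set (Fin q → Fin q) :=
  {v | ∃ g ∈ T, v = fun i => g i}

def codeNbrs {m q : ℕ} (C : Set (Fin m → Fin q)) : Set (Fin m → Fin q) :=
  {v | v ∉ C ∧ ∃ c ∈ C, hammingDist v c = 1}

/-!
A word `v` at distance one from a permutation `g`, differing from it at position `j`, is not itself a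
permutation. If `v j = g k`, then it is also at distance one from `swap (g j) (v j) * g`, now
differing only at position `k`; this permutation has the opposite sign to `g`. So every
neighbour of `C(S_q)` is already a neighbour of an even permutation.
-/

theorem hammingDist_eq_one_iff {ι : Type*} [Fintype ι] {β : ι → Type*} [∀ i, DecidableEq (β i)]
    {x y : ∀ i, β i} : hammingDist x y = 1 ↔ ∃ j, x j ≠ y j ∧ ∀ i, i ≠ j → x i = y i := by
  rw [hammingDist, Finset.card_eq_one_iff_existsUnique]
  simp only [ExistsUnique, Finset.mem_filter, Finset.mem_univ, true_and]
  exact exists_congr fun j => and_congr_right fun _ => forall_congr' fun i => not_imp_comm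

namespace Equiv.Perm

variable {α : Type*} [Fintype α] [DecidableEq α]

theorem hammingDist_ne_one (g h : Perm α) : hammingDist (⇑g) (⇑h) ≠ 1 := by
  intro hd
  obtain ⟨j, hj, hrest⟩ := hammingDist_eq_one_iff.mp hd
  obtain ⟨k, hk⟩ := g.surjective (h j)
  have hkj : k ≠ j := fun e => hj (e ▸ hk)
  exact hkj (h.injective (hrest k hkj ▸ hk))

theorem exists_sign_neg_hammingDist_eq_one {v : α → α} {g : Perm α}
    (hd : hammingDist v (⇑g) = 1) : ∃ h : Perm α, sign h = -sign g ∧ hammingDist v (⇑h) = 1 := by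
  obtain ⟨j, hj, hrest⟩ := hammingDist_eq_one_iff.mp hd
  set k := g.symm (v j)
  have hgk : g k = v j := g.apply_symm_apply (v j)
  have hkj : k ≠ j := fun e => hj (e ▸ hgk).symm
  refine ⟨swap (g j) (v j) * g, by rw [map_mul, sign_swap (Ne.symm hj), neg_one_mul],
    hammingDist_eq_one_iff.mpr ⟨k, ?_, fun i hik => ?_⟩⟩
  · simpa [hgk, hrest k hkj] using hj
  · by_cases hij : i = j
    · simp [hij]
    · have h1 : g i ≠ g j := g.injective.ne hij
      have h2 : g i ≠ v j := fun e => hik (by rw [← hgk] at e; exact g.injective e)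
      simp [swap_apply_of_ne_of_ne h1 h2, hrest i hij]

end Equiv.Perm

theorem codeNbrs_permCode {q : ℕ} (T : Set (Equiv.Perm (Fin q))) :
    codeNbrs (permCode T) = {v | ∃ g ∈ T, hammingDist v (⇑g) = 1} := by
  ext v
  simp only [codeNbrs, permCode, Set.mem_ofPred_eq]
  constructor
  · rintro ⟨-, _, ⟨g, hg, rfl⟩, hd⟩
    exact ⟨g, hg, hd⟩
  rintro ⟨g, hg, hd⟩
  refine ⟨?_, _, ⟨g, hg, rfl⟩, hd⟩
  rintro ⟨h, -, rfl⟩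
  exact h.hammingDist_ne_one g hd

theorem stmt7_general (q : ℕ) :
    codeNbrs (permCode (alternatingGroup (Fin q) : Set (Equiv.Perm (Fin q))))
      = codeNbrs (permCode (Set.univ : Set (Equiv.Perm (Fin q)))) := by
  rw [codeNbrs_permCode, codeNbrs_permCode]
  ext v
  refine ⟨fun ⟨g, _, hd⟩ => ⟨g, Set.mem_univ g, hd⟩, fun ⟨g, _, hd⟩ => ?_⟩
  by_cases hg : g ∈ alternatingGroup (Fin q)
  · exact ⟨g, hg, hd⟩
  · obtain ⟨h, hsign, hhd⟩ := Equiv.Perm.exists_sign_neg_hammingDist_eq_one hd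
    refine ⟨h, ?_, hhd⟩
    rw [SetLike.mem_coe, Equiv.Perm.mem_alternatingGroup, hsign,
      Int.units_ne_iff_eq_neg.mp (Equiv.Perm.mem_alternatingGroup.not.mp hg), neg_neg]

/-- `Γ₁(C(A_q)) = Γ₁(C(S_q))` for `q ≥ 3`. -/
theorem stmt7 (q : ℕ) (hq : 3 ≤ q) :
    codeNbrs (permCode (alternatingGroup (Fin q) : Set (Equiv.Perm (Fin q))))
      = codeNbrs (permCode (Set.univ : Set (Equiv.Perm (Fin q)))) :=
  stmt7_general q
end

section
/- The group X = Diag_q(S_q) ⋊ L acts transitively on Γ₁(C(S_q)), the set of neighbours of C(S_q) in H(q,q). -/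
/-- The diagonal action `x_y`: apply the alphabet permutation `y` in every coordinate. -/
def diagAct {m q : ℕ} (y : Equiv.Perm (Fin q)) (v : Fin m → Fin q) : Fin m → Fin q :=
  fun i => y (v i)

/-- The action `σ(z)` permuting coordinate positions by `z`. -/
def posAct {m q : ℕ} (z : Equiv.Perm (Fin m)) (v : Fin m → Fin q) : Fin m → Fin q :=
  fun i => v (z⁻¹ i)

/-!
Every neighbour of `C(S_q)` has the form `g ∘ ε i j` with `g ∈ S_q`, `i ≠ j`, where `ε i j` is
the identity word with its `i`-th letter replaced by `j`. Relabelling positions by `z` conjugates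
`ε i j` into `ε (z i) (z j)`, and `S_q` is 2-transitive, so a position permutation `z` moves the
pair `(i, j)` to any other pair `(p, l)`; the alphabet permutation `y` then corrects the outer
permutation `g` into any prescribed `h`.
-/

open Function Equiv

theorem exists_ne_and_eq_update_of_hammingDist_eq_one {ι : Type*} [Fintype ι] [DecidableEq ι]
    {β : ι → Type*} [∀ i, DecidableEq (β i)] {x y : ∀ i, β i} (h : hammingDist x y = 1) :
    ∃ i, x i ≠ y i ∧ x = update y i (x i) := by
  obtain ⟨i, hi⟩ := Finset.card_eq_one.mp h
  have ne_iff (m : ι) : x m ≠ y m ↔ m = i := by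
    simpa using congrArg (m ∈ ·) hi
  exact ⟨i, (ne_iff i).mpr rfl,
    eq_update_iff.mpr ⟨rfl, fun m hm => not_not.mp ((ne_iff m).not.mpr hm)⟩⟩

theorem exists_eq_comp_update_id_of_mem_codeNbrs {q : ℕ} {T : Set (Perm (Fin q))}
    {μ : Fin q → Fin q} (hμ : μ ∈ codeNbrs (permCode T)) :
    ∃ g ∈ T, ∃ i j : Fin q, j ≠ i ∧ μ = g ∘ update id i j := by
  obtain ⟨-, _, ⟨g, hg, rfl⟩, hd⟩ := hμ
  obtain ⟨i, hne, hμ⟩ := exists_ne_and_eq_update_of_hammingDist_eq_one hd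
  refine ⟨g, hg, i, g⁻¹ (μ i), fun h => hne (Perm.inv_eq_iff_eq.mp h), ?_⟩
  simpa [comp_update] using hμ

theorem Equiv.Perm.exists_apply_eq_and_apply_eq {α : Type*} [DecidableEq α] {i j p l : α}
    (hij : i ≠ j) (hpl : p ≠ l) : ∃ z : Perm α, z i = p ∧ z j = l := by
  have hj : swap i p j ≠ p := by
    simpa only [swap_apply_left] using (swap i p).injective.ne hij.symm
  refine ⟨swap (swap i p j) l * swap i p, ?_, swap_apply_left _ _⟩
  rw [Perm.mul_apply, swap_apply_left, swap_apply_of_ne_of_ne hj.symm hpl]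

theorem Equiv.Perm.update_id_comp_inv {α : Type*} [DecidableEq α] (z : Perm α) (i j : α) :
    update id i j ∘ ⇑z⁻¹ = ⇑z⁻¹ ∘ update id (z i) (z j) := by
  ext m
  by_cases hm : m = z i <;> simp [hm, symm_apply_eq]

theorem stmt11_general (q : ℕ) :
    ∀ μ ∈ codeNbrs (permCode (Set.univ : Set (Equiv.Perm (Fin q)))),
      ∀ ν ∈ codeNbrs (permCode (Set.univ : Set (Equiv.Perm (Fin q)))),
        ∃ y z : Equiv.Perm (Fin q), posAct z (diagAct y μ) = ν := by
  intro μ hμ ν hν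
  obtain ⟨g, -, i, j, hji, rfl⟩ := exists_eq_comp_update_id_of_mem_codeNbrs hμ
  obtain ⟨h, -, p, l, hlp, rfl⟩ := exists_eq_comp_update_id_of_mem_codeNbrs hν
  obtain ⟨z, rfl, rfl⟩ := Perm.exists_apply_eq_and_apply_eq hji.symm hlp.symm
  refine ⟨h * z * g⁻¹, z, ?_⟩
  calc posAct z (diagAct (h * z * g⁻¹) (g ∘ update id i j))
      = ⇑(h * z * g⁻¹) ∘ g ∘ (update id i j ∘ ⇑z⁻¹) := rfl
    _ = ⇑(h * z * g⁻¹) ∘ g ∘ ⇑z⁻¹ ∘ update id (z i) (z j) := by rw [Perm.update_id_comp_inv]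
    _ = h ∘ update id (z i) (z j) := by ext; simp

/-- `X = Diag_q(S_q) ⋊ L` acts transitively on `Γ₁(C(S_q))` for `q ≥ 2`. -/
theorem stmt11 (q : ℕ) (hq : 2 ≤ q) :
    ∀ μ ∈ codeNbrs (permCode (Set.univ : Set (Equiv.Perm (Fin q)))),
      ∀ ν ∈ codeNbrs (permCode (Set.univ : Set (Equiv.Perm (Fin q)))),
        ∃ y z : Equiv.Perm (Fin q), posAct z (diagAct y μ) = ν :=
  stmt11_general q
end

section
/- If C ⊆ H(m,q) is X-neighbour transitive (X fixes C and Γ₁(C) setwise and acts transitively on each), then Prod(C,l) is (X wr S_l)-neighbour transitive in H(lm,q), where the wreath product acts coordinatewise on the l blocks and permutes the blocks. -/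
/-- The Hamming distance in `H(lm,q)`, viewing vertices as `l`-tuples of vertices of
`H(m,q)`: the sum of the blockwise Hamming distances. -/
def prodDist {l m q : ℕ} (u v : Fin l → Fin m → Fin q) : ℕ :=
  ∑ i, hammingDist (u i) (v i)

/-- The product code `Prod(C,l)` in `H(lm,q)`. -/
def prodCode {m q : ℕ} (l : ℕ) (C : Set (Fin m → Fin q)) : Set (Fin l → Fin m → Fin q) :=
  {u | ∀ i, u i ∈ C}

/-- The set of neighbours of a code in `H(lm,q)`. -/
def prodNbrs {l m q : ℕ} (D : Set (Fin l → Fin m → Fin q)) : Set (Fin l → Fin m → Fin q) :=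
  {v | v ∉ D ∧ ∃ u ∈ D, prodDist v u = 1}

/-- The action of an element `(x₁,…,x_l; σ)` of the wreath product `X wr S_l`:
apply `x_i` in block `i`, then permute the blocks by `σ`. -/
def wreathAct {l m q : ℕ} (xs : Fin l → Equiv.Perm (Fin m → Fin q)) (σ : Equiv.Perm (Fin l))
    (v : Fin l → Fin m → Fin q) : Fin l → Fin m → Fin q :=
  fun i => xs (σ⁻¹ i) (v (σ⁻¹ i))

section Aux
variable {m q l : ℕ} {C : Set (Fin m → Fin q)}

lemma mem_iff_of_fix {S : Set (Fin m → Fin q)} {x : Equiv.Perm (Fin m → Fin q)}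
    (h : (⇑x) '' S = S) (α : Fin m → Fin q) : x α ∈ S ↔ α ∈ S := by
  constructor
  · intro hx
    rw [← h] at hx
    obtain ⟨β, hβ, e⟩ := hx
    rwa [← x.injective e]
  · intro hα
    rw [← h]; exact ⟨α, hα, rfl⟩

lemma wreath_inv (xs : Fin l → Equiv.Perm (Fin m → Fin q)) (σ : Equiv.Perm (Fin l))
    (v : Fin l → Fin m → Fin q) :
    wreathAct (fun j => (xs (σ⁻¹ j))⁻¹) σ⁻¹ (wreathAct xs σ v) = v := by
  funext i
  simp [wreathAct]

lemma prodNbrs_char (v : Fin l → Fin m → Fin q) :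
    v ∈ prodNbrs (prodCode l C) ↔ ∃ i₀, v i₀ ∈ codeNbrs C ∧ ∀ i ≠ i₀, v i ∈ C := by
  constructor
  · rintro ⟨hvn, u, hu, hd⟩
    have hex : ∃ i₀, hammingDist (v i₀) (u i₀) ≠ 0 := by
      by_contra h
      push_neg at h
      simp [prodDist, h] at hd
    obtain ⟨i₀, hi₀⟩ := hex
    have key : hammingDist (v i₀) (u i₀) + ∑ i ∈ Finset.univ.erase i₀, hammingDist (v i) (u i)
        = ∑ i, hammingDist (v i) (u i) :=
      Finset.add_sum_erase Finset.univ (fun i => hammingDist (v i) (u i)) (Finset.mem_univ i₀)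
    have hrest : ∑ i ∈ Finset.univ.erase i₀, hammingDist (v i) (u i) = 0 := by
      rw [prodDist] at hd
      omega
    have h0 : ∀ i ≠ i₀, hammingDist (v i) (u i) = 0 := by
      intro i hi
      have := Finset.sum_eq_zero_iff.mp hrest i (by simp [hi])
      exact this
    have hvC : ∀ i ≠ i₀, v i ∈ C := by
      intro i hi
      have : v i = u i := hammingDist_eq_zero.mp (h0 i hi)
      rw [this]; exact hu i
    have hd1 : hammingDist (v i₀) (u i₀) = 1 := by
      rw [prodDist] at hd
      omega
    refine ⟨i₀, ⟨?_, u i₀, hu i₀, hd1⟩, hvC⟩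
    intro hvi
    apply hvn
    intro i
    by_cases hi : i = i₀
    · rwa [hi]
    · exact hvC i hi
  · rintro ⟨i₀, ⟨hni, c, hc, hdc⟩, hrest⟩
    refine ⟨fun h => hni (h i₀), Function.update v i₀ c, ?_, ?_⟩
    · intro i
      by_cases hi : i = i₀
      · subst hi; simp [hc]
      · simp [Function.update_of_ne hi]; exact hrest i hi
    · rw [prodDist, Finset.sum_eq_single i₀]
      · simp [hdc]
      · intro i _ hi
        simp [Function.update_of_ne hi]
      · simp

lemma image_eq_of_forward {S : Set (Fin l → Fin m → Fin q)}
    {X : Subgroup (Equiv.Perm (Fin m → Fin q))}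
    (H : ∀ (xs : Fin l → Equiv.Perm (Fin m → Fin q)) (σ : Equiv.Perm (Fin l)),
      (∀ i, xs i ∈ X) → ∀ v ∈ S, wreathAct xs σ v ∈ S)
    (xs : Fin l → Equiv.Perm (Fin m → Fin q)) (σ : Equiv.Perm (Fin l))
    (hxs : ∀ i, xs i ∈ X) : wreathAct xs σ '' S = S := by
  apply subset_antisymm
  · rintro _ ⟨v, hv, rfl⟩
    exact H xs σ hxs v hv
  · intro v hv
    refine ⟨wreathAct (fun j => (xs (σ⁻¹ j))⁻¹) σ⁻¹ v, ?_, ?_⟩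
    · exact H _ _ (fun j => X.inv_mem (hxs _)) v hv
    · funext i
      simp [wreathAct]


end Aux

/-- If `C` is `X`-neighbour transitive in `H(m,q)` then `Prod(C,l)` is
`(X wr S_l)`-neighbour transitive in `H(lm,q)`: every wreath element fixes the product
code and its neighbour set setwise, and the wreath product acts transitively on both. -/
theorem stmt15 (m q l : ℕ) (C : Set (Fin m → Fin q))
    (X : Subgroup (Equiv.Perm (Fin m → Fin q)))
    (hne : C.Nonempty)
    (hfixC : ∀ x ∈ X, (⇑x) '' C = C)
    (htrC : ∀ α ∈ C, ∀ β ∈ C, ∃ x ∈ X, x α = β)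
    (hfixN : ∀ x ∈ X, (⇑x) '' codeNbrs C = codeNbrs C)
    (htrN : ∀ μ ∈ codeNbrs C, ∀ ν ∈ codeNbrs C, ∃ x ∈ X, x μ = ν) :
    (∀ (xs : Fin l → Equiv.Perm (Fin m → Fin q)) (σ : Equiv.Perm (Fin l)),
        (∀ i, xs i ∈ X) → wreathAct xs σ '' prodCode l C = prodCode l C) ∧
    (∀ u ∈ prodCode l C, ∀ v ∈ prodCode l C,
        ∃ (xs : Fin l → Equiv.Perm (Fin m → Fin q)) (σ : Equiv.Perm (Fin l)),
          (∀ i, xs i ∈ X) ∧ wreathAct xs σ u = v) ∧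
    (∀ (xs : Fin l → Equiv.Perm (Fin m → Fin q)) (σ : Equiv.Perm (Fin l)),
        (∀ i, xs i ∈ X) →
          wreathAct xs σ '' prodNbrs (prodCode l C) = prodNbrs (prodCode l C)) ∧
    (∀ u ∈ prodNbrs (prodCode l C), ∀ v ∈ prodNbrs (prodCode l C),
        ∃ (xs : Fin l → Equiv.Perm (Fin m → Fin q)) (σ : Equiv.Perm (Fin l)),
          (∀ i, xs i ∈ X) ∧ wreathAct xs σ u = v) := by
  have memC : ∀ x ∈ X, ∀ α, x α ∈ C ↔ α ∈ C := fun x hx => mem_iff_of_fix (hfixC x hx)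
  have memN : ∀ x ∈ X, ∀ α, x α ∈ codeNbrs C ↔ α ∈ codeNbrs C :=
    fun x hx => mem_iff_of_fix (hfixN x hx)
  have fwdC : ∀ (xs : Fin l → Equiv.Perm (Fin m → Fin q)) (σ : Equiv.Perm (Fin l)),
      (∀ i, xs i ∈ X) → ∀ v ∈ prodCode l C, wreathAct xs σ v ∈ prodCode l C := by
    intro xs σ hxs v hv i
    exact (memC _ (hxs _) _).mpr (hv _)
  have fwdN : ∀ (xs : Fin l → Equiv.Perm (Fin m → Fin q)) (σ : Equiv.Perm (Fin l)),
      (∀ i, xs i ∈ X) → ∀ v ∈ prodNbrs (prodCode l C), wreathAct xs σ v ∈ prodNbrs (prodCode l C) := by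
    intro xs σ hxs v hv
    obtain ⟨i₀, hi₀, hrest⟩ := (prodNbrs_char v).mp hv
    refine (prodNbrs_char _).mpr ⟨σ i₀, ?_, ?_⟩
    · show xs (σ⁻¹ (σ i₀)) (v (σ⁻¹ (σ i₀))) ∈ codeNbrs C
      simpa using (memN _ (hxs _) _).mpr hi₀
    · intro j hj
      show xs (σ⁻¹ j) (v (σ⁻¹ j)) ∈ C
      refine (memC _ (hxs _) _).mpr (hrest _ ?_)
      intro h
      exact hj (by rw [← h]; simp)
  refine ⟨fun xs σ hxs => image_eq_of_forward fwdC xs σ hxs, ?_, 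
    fun xs σ hxs => image_eq_of_forward fwdN xs σ hxs, ?_⟩
  · intro u hu v hv
    choose x hxX hxv using fun i => htrC (u i) (hu i) (v i) (hv i)
    refine ⟨x, 1, hxX, ?_⟩
    funext i
    simpa [wreathAct] using hxv i
  · intro u hu v hv
    obtain ⟨i₀, hi₀, hurest⟩ := (prodNbrs_char u).mp hu
    obtain ⟨j₀, hj₀, hvrest⟩ := (prodNbrs_char v).mp hv
    set σ := Equiv.swap i₀ j₀ with hσ
    have hmap : ∀ k, ∃ x ∈ X, x (u k) = v (σ k) := by
      intro k
      by_cases hk : k = i₀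
      · have hσk : σ k = j₀ := by rw [hk, hσ]; exact Equiv.swap_apply_left _ _
        rw [hσk, hk]
        exact htrN _ hi₀ _ hj₀
      · have hσk : σ k ≠ j₀ := by
          intro h
          exact hk (σ.injective (by rw [h, Equiv.swap_apply_left]))
        exact htrC _ (hurest k hk) _ (hvrest _ hσk)
    choose x hxX hxv using hmap
    refine ⟨x, σ, hxX, ?_⟩
    funext j
    show x (σ⁻¹ j) (u (σ⁻¹ j)) = v j
    rw [hxv (σ⁻¹ j)]
    simp
end

section
/- Let C(q,l) ⊆ Prod(C(S_q),l) consist of tuples (α(g₁),…,α(g_l)) with |{i : g_i ∈ A_q}| even. Then Γ₁(C(q,l)) = Γ₁(Prod(C(S_q),l)). -/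
/-- The product code `Prod(C(S_q), l)` in `H(lq,q)`: tuples whose blocks are all
permutation codewords. -/
def prodSq (q l : ℕ) : Set (Fin l → Fin q → Fin q) :=
  {u | ∀ i, ∃ g : Equiv.Perm (Fin q), u i = fun k => g k}

/-- The code `C(q,l)`: tuples `(α(g₁),…,α(g_l))` with an even number of the `g_i` even (i.e. of sign 1, lying in `A_q`). -/
def cql (q l : ℕ) : Set (Fin l → Fin q → Fin q) :=
  {u | ∃ g : Fin l → Equiv.Perm (Fin q), (∀ i, u i = fun k => g i k) ∧
    Even (Finset.univ.filter fun i => Equiv.Perm.sign (g i) = 1).card}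

/-!
Two permutation words never differ in exactly one coordinate (`σ⁻¹ * τ` would move a single
point), so `Prod(C(S_q), l)` has minimum distance at least two and a neighbour of `C(q,l)` lies
outside the whole product code. Conversely, if a word is at distance one from the permutation
word of `σ`, composing `σ` with a transposition gives another permutation word at distance one
from it, of the opposite sign. Re-choosing the block in which a neighbour of the product code
differs in this way corrects the parity condition defining `C(q,l)`.
-/

open Finset

lemma Equiv.Perm.hammingDist_ne_one_s16 {α : Type*} [Fintype α] [DecidableEq α] (σ τ : Equiv.Perm α) :
    hammingDist ⇑σ ⇑τ ≠ 1 := by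
  have h : hammingDist ⇑σ ⇑τ = #(σ⁻¹ * τ).support := by
    rw [hammingDist]
    congr 1
    ext k
    simp [eq_comm, Equiv.eq_symm_apply]
  rw [h]
  exact (σ⁻¹ * τ).card_support_ne_one

lemma Equiv.Perm.exists_hammingDist_eq_one_sign_eq_neg {α : Type*} [Fintype α] [DecidableEq α]
    (σ : Equiv.Perm α) (w : α → α) (hw : hammingDist w ⇑σ = 1) :
    ∃ τ : Equiv.Perm α, hammingDist w ⇑τ = 1 ∧ Equiv.Perm.sign τ = -Equiv.Perm.sign σ := by
  obtain ⟨k₀, hk₀⟩ := card_eq_one.mp hw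
  have hdiff : ∀ k, w k ≠ σ k ↔ k = k₀ := fun k => by
    simpa using congrArg (k ∈ ·) hk₀
  obtain ⟨j, hσj⟩ : ∃ j, σ j = w k₀ := σ.surjective _
  have hj : j ≠ k₀ := by
    rintro rfl
    exact (hdiff j).mpr rfl hσj.symm
  refine ⟨σ * Equiv.swap k₀ j, ?_, by
    rw [Equiv.Perm.sign_mul, Equiv.Perm.sign_swap hj.symm, mul_neg_one]⟩
  have hle : hammingDist w ⇑(σ * Equiv.swap k₀ j) ≤ 1 := by
    have hagree : ∀ k ≠ j, w k = (σ * Equiv.swap k₀ j) k := by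
      intro k hkj
      rcases eq_or_ne k k₀ with rfl | hk
      · rw [Equiv.Perm.mul_apply, Equiv.swap_apply_left, hσj]
      · rw [Equiv.Perm.mul_apply, Equiv.swap_apply_of_ne_of_ne hk hkj]
        exact not_not.mp (mt (hdiff k).mp hk)
    have hsub : ({k | w k ≠ (σ * Equiv.swap k₀ j) k} : Finset α) ⊆ {j} := fun k hk => by
      simp only [mem_filter, mem_univ, true_and] at hk
      exact mem_singleton.mpr (by_contra fun hkj => hk (hagree k hkj))
    exact (card_le_card hsub).trans (card_singleton j).le
  -- `w` is not itself a permutation word, being at distance one from `σ`.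
  have hne : hammingDist w ⇑(σ * Equiv.swap k₀ j) ≠ 0 := by
    rintro h
    rw [hammingDist_eq_zero] at h
    exact (σ * Equiv.swap k₀ j).hammingDist_ne_one_s16 σ (h ▸ hw)
  omega

lemma even_card_filter_iff_not_even_of_flip {ι : Type*} [Fintype ι] [DecidableEq ι]
    {p r : ι → Prop} [DecidablePred p] [DecidablePred r] (i₀ : ι) (hflip : p i₀ ↔ ¬ r i₀)
    (hagree : ∀ i ≠ i₀, p i ↔ r i) : Even #{i | p i} ↔ ¬ Even #{i | r i} := by
  rw [card_filter, card_filter, ← add_sum_erase _ _ (mem_univ i₀),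
    ← add_sum_erase _ _ (mem_univ i₀),
    sum_congr rfl fun i hi => if_congr (hagree i (ne_of_mem_erase hi)) rfl rfl]
  by_cases h : r i₀ <;> simp [h, hflip, Nat.even_add_one, parity_simps]

lemma prodDist_eq_one_iff {l m q : ℕ} (v u : Fin l → Fin m → Fin q) :
    prodDist v u = 1 ↔ ∃ i₀, hammingDist (v i₀) (u i₀) = 1 ∧ ∀ i ≠ i₀, v i = u i := by
  constructor
  · intro h
    obtain ⟨i₀, -, hi₀⟩ := exists_ne_zero_of_sum_ne_zero (h.trans_ne one_ne_zero)
    rw [prodDist, ← add_sum_erase _ _ (mem_univ i₀)] at h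
    have hrest : ∀ i ∈ univ.erase i₀, hammingDist (v i) (u i) = 0 :=
      sum_eq_zero_iff.mp (by omega)
    exact ⟨i₀, by omega, fun i hi =>
      hammingDist_eq_zero.mp (hrest i (mem_erase.mpr ⟨hi, mem_univ i⟩))⟩
  · rintro ⟨i₀, h₁, hrest⟩
    rwa [prodDist, sum_eq_single i₀ (fun i _ hi => hammingDist_eq_zero.mpr (hrest i hi)) (by simp)]

lemma prodNbrs_subset_of_subset {l m q : ℕ} {D E : Set (Fin l → Fin m → Fin q)} (hDE : D ⊆ E)
    (hE : ∀ u ∈ E, ∀ v ∈ E, prodDist u v ≠ 1) : prodNbrs D ⊆ prodNbrs E :=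
  fun v ⟨_, u, hu, hvu⟩ => ⟨fun hv => hE v hv u (hDE hu) hvu, u, hDE hu, hvu⟩

lemma cql_subset_prodSq (q l : ℕ) : cql q l ⊆ prodSq q l :=
  fun _ ⟨g, hg, _⟩ i => ⟨g i, hg i⟩

lemma prodDist_ne_one_of_mem_prodSq {q l : ℕ} {u v : Fin l → Fin q → Fin q}
    (hu : u ∈ prodSq q l) (hv : v ∈ prodSq q l) : prodDist u v ≠ 1 := by
  intro h
  obtain ⟨i, hi, -⟩ := (prodDist_eq_one_iff u v).mp h
  obtain ⟨σ, hσ⟩ := hu i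
  obtain ⟨τ, hτ⟩ := hv i
  rw [hσ, hτ] at hi
  exact σ.hammingDist_ne_one_s16 τ hi

lemma exists_mem_cql_prodDist_eq_one {q l : ℕ} {u v : Fin l → Fin q → Fin q}
    (hu : u ∈ prodSq q l) (hvu : prodDist v u = 1) : ∃ u' ∈ cql q l, prodDist v u' = 1 := by
  choose g hg using hu
  by_cases hpar : Even #{i | Equiv.Perm.sign (g i) = 1}
  · exact ⟨u, ⟨g, hg, hpar⟩, hvu⟩
  obtain ⟨i₀, hi₀, hrest⟩ := (prodDist_eq_one_iff v u).mp hvu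
  rw [hg i₀] at hi₀
  obtain ⟨τ, hτ, hsign⟩ := (g i₀).exists_hammingDist_eq_one_sign_eq_neg (v i₀) hi₀
  refine ⟨fun i => ⇑(Function.update g i₀ τ i), ⟨_, fun i => rfl, ?_⟩, ?_⟩
  · refine (even_card_filter_iff_not_even_of_flip i₀ ?_ fun i hi => ?_).mpr hpar
    · rw [Function.update_self, hsign, neg_eq_iff_eq_neg, ← Int.units_ne_iff_eq_neg]
    · rw [Function.update_of_ne hi]
  · refine (prodDist_eq_one_iff _ _).mpr ⟨i₀, by simpa using hτ, fun i hi => ?_⟩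
    rw [Function.update_of_ne hi, hrest i hi, hg i]

theorem stmt16_general (q l : ℕ) :
    prodNbrs (cql q l) = prodNbrs (prodSq q l) := by
  refine (prodNbrs_subset_of_subset (cql_subset_prodSq q l)
    fun u hu v hv => prodDist_ne_one_of_mem_prodSq hu hv).antisymm ?_
  rintro v ⟨hv, u, hu, hvu⟩
  obtain ⟨u', hu', hvu'⟩ := exists_mem_cql_prodDist_eq_one hu hvu
  exact ⟨fun hvC => hv (cql_subset_prodSq q l hvC), u', hu', hvu'⟩

/-- `Γ₁(C(q,l)) = Γ₁(Prod(C(S_q),l))`. -/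
theorem stmt16 (q l : ℕ) (hq : 2 ≤ q) (hl : 1 ≤ l) :
    prodNbrs (cql q l) = prodNbrs (prodSq q l) :=
  stmt16_general q l
end

section
/- The code C(q,l) ⊆ H(lq,q), consisting of tuples (α(g₁),…,α(g_l)) with g_i ∈ S_q and |{i : g_i ∈ A_q}| even, has minimum distance exactly 3 for q ≥ 3. -/
lemma ham_eq {q : ℕ} (a b : Equiv.Perm (Fin q)) :
    hammingDist (fun k => a k) (fun k => b k) = (b⁻¹ * a).support.card := by
  show (Finset.univ.filter fun k => a k ≠ b k).card = _
  rw [Equiv.Perm.support]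
  congr 1
  apply Finset.filter_congr
  intro k _
  rw [not_iff_not, Equiv.Perm.mul_apply, Equiv.Perm.inv_eq_iff_eq]

lemma two_le_supp {q : ℕ} (σ : Equiv.Perm (Fin q)) (h1 : σ ≠ 1) : 2 ≤ σ.support.card :=
  Equiv.Perm.one_lt_card_support_of_ne_one h1

lemma three_le_supp {q : ℕ} (σ : Equiv.Perm (Fin q)) (h1 : σ ≠ 1)
    (hs : Equiv.Perm.sign σ = 1) : 3 ≤ σ.support.card := by
  have h2 := two_le_supp σ h1
  rcases eq_or_lt_of_le h2 with h | h
  · exfalso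
    obtain ⟨x, y, hxy, rfl⟩ := Equiv.Perm.card_support_eq_two.mp h.symm
    rw [Equiv.Perm.sign_swap hxy] at hs
    exact absurd hs (by decide)
  · exact h

/-- For `q ≥ 3`, the code `C(q,l) ⊆ H(lq,q)` has minimum distance exactly 3. -/
theorem stmt17 (q l : ℕ) (hq : 3 ≤ q) (hl : 1 ≤ l) :
    (∀ u ∈ cql q l, ∀ v ∈ cql q l, u ≠ v → 3 ≤ prodDist u v) ∧
      ∃ u ∈ cql q l, ∃ v ∈ cql q l, u ≠ v ∧ prodDist u v = 3 := by
  constructor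
  · rintro u ⟨g, hg, hge⟩ v ⟨h, hh, hhe⟩ huv
    have hdist : ∀ i, hammingDist (u i) (v i) = ((h i)⁻¹ * g i).support.card := by
      intro i; rw [hg i, hh i, ham_eq]
    set D := Finset.univ.filter (fun i => g i ≠ h i) with hD
    have hDne : D.Nonempty := by
      by_contra hc
      apply huv
      funext i
      rw [Finset.not_nonempty_iff_eq_empty, Finset.filter_eq_empty_iff] at hc
      have h2 := hc (Finset.mem_univ i)
      push_neg at h2
      rw [hg i, hh i, h2]
    have hterm : ∀ i ∈ D, 2 ≤ hammingDist (u i) (v i) := by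
      intro i hi
      rw [hdist i]
      apply two_le_supp
      intro hc
      rw [hD, Finset.mem_filter] at hi
      exact hi.2 (inv_mul_eq_one.mp hc).symm
    rcases lt_or_ge D.card 2 with hcard | hcard
    · have h1 : D.card = 1 := le_antisymm (by omega) (Finset.Nonempty.card_pos hDne)
      obtain ⟨i, hi⟩ := Finset.card_eq_one.mp h1
      have hoff : ∀ j, j ≠ i → g j = h j := by
        intro j hj
        by_contra hc
        have hmem : j ∈ D := Finset.mem_filter.mpr ⟨Finset.mem_univ j, hc⟩
        rw [hi, Finset.mem_singleton] at hmem
        exact hj hmem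
      have hne : g i ≠ h i := by
        have hmem : i ∈ D := hi ▸ Finset.mem_singleton_self i
        exact (Finset.mem_filter.mp hmem).2
      have key : ∀ (f : Fin l → Equiv.Perm (Fin q)),
          (Finset.univ.filter fun j => Equiv.Perm.sign (f j) = 1).card
            = (if Equiv.Perm.sign (f i) = 1 then 1 else 0)
              + ∑ j ∈ Finset.univ.erase i,
                  (if Equiv.Perm.sign (f j) = 1 then 1 else 0) := by
        intro f
        rw [Finset.card_filter]
        exact (Finset.add_sum_erase _ _ (Finset.mem_univ i)).symm
      rw [key g] at hge
      rw [key h] at hhe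
      have hsum : ∑ j ∈ Finset.univ.erase i, (if Equiv.Perm.sign (g j) = 1 then 1 else 0)
          = ∑ j ∈ Finset.univ.erase i, (if Equiv.Perm.sign (h j) = 1 then 1 else 0) := by
        apply Finset.sum_congr rfl
        intro j hj
        rw [hoff j (Finset.ne_of_mem_erase hj)]
      rw [hsum] at hge
      have hpar : (if Equiv.Perm.sign (g i) = 1 then 1 else 0 : ℕ)
          = (if Equiv.Perm.sign (h i) = 1 then 1 else 0) := by
        rcases hge with ⟨x, hx⟩
        rcases hhe with ⟨y, hy⟩
        by_cases hgi : Equiv.Perm.sign (g i) = 1 <;>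
          by_cases hhi : Equiv.Perm.sign (h i) = 1 <;>
          simp [hgi, hhi] at hx hy ⊢ <;> omega
      have hiff : (Equiv.Perm.sign (g i) = 1) ↔ (Equiv.Perm.sign (h i) = 1) := by
        constructor <;> intro hx <;> by_contra hc <;> simp [hx, hc] at hpar
      have hsign : Equiv.Perm.sign (g i) = Equiv.Perm.sign (h i) := by
        rcases Int.units_eq_one_or (Equiv.Perm.sign (g i)) with h1' | h1'
        · rw [h1', (hiff.mp h1').symm]
        · rcases Int.units_eq_one_or (Equiv.Perm.sign (h i)) with h2' | h2'
          · exact absurd (hiff.mpr h2') (by rw [h1']; decide)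
          · rw [h1', h2']
      have h3 : 3 ≤ hammingDist (u i) (v i) := by
        rw [hdist i]
        apply three_le_supp
        · intro hc; exact hne (inv_mul_eq_one.mp hc).symm
        · rw [map_mul, map_inv, hsign, inv_mul_cancel]
      calc 3 ≤ hammingDist (u i) (v i) := h3
        _ ≤ prodDist u v := by
            unfold prodDist
            exact Finset.single_le_sum (f := fun j => hammingDist (u j) (v j)) (fun j _ => Nat.zero_le _) (Finset.mem_univ i)
    · obtain ⟨i, hi, j, hj, hij⟩ := Finset.one_lt_card.mp hcard
      have h4 : 4 ≤ prodDist u v := by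
        calc 4 = 2 + 2 := rfl
          _ ≤ hammingDist (u i) (v i) + hammingDist (u j) (v j) :=
              Nat.add_le_add (hterm i hi) (hterm j hj)
          _ = ∑ k ∈ ({i, j} : Finset (Fin l)), hammingDist (u k) (v k) := by
              rw [Finset.sum_pair hij]
          _ ≤ prodDist u v := by
              unfold prodDist
              exact Finset.sum_le_sum_of_subset (Finset.subset_univ _)
      omega
  · have h0 : (0 : ℕ) < q := by omega
    set a : Fin q := ⟨0, by omega⟩ with ha
    set b : Fin q := ⟨1, by omega⟩ with hb
    set c0 : Fin q := ⟨2, by omega⟩ with hc0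
    have hab : a ≠ b := by simp [ha, hb, Fin.ext_iff]
    have hbc : b ≠ c0 := by simp [hb, hc0, Fin.ext_iff]
    have hac : a ≠ c0 := by simp [ha, hc0, Fin.ext_iff]
    set c : Equiv.Perm (Fin q) := Equiv.swap a b * Equiv.swap b c0 with hc
    have hsc : Equiv.Perm.sign c = 1 := by
      rw [hc, map_mul, Equiv.Perm.sign_swap hab, Equiv.Perm.sign_swap hbc]
      decide
    have hsupp : c.support = {a, b, c0} :=
      Equiv.Perm.support_swap_mul_swap (by simp [hab, hbc, hac])
    have hcard3 : c.support.card = 3 := by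
      rw [hsupp]
      rw [Finset.card_insert_of_notMem (by simp [hab, hac]),
        Finset.card_insert_of_notMem (by simp [hbc]), Finset.card_singleton]
    have hcb : c b = c0 := by
      rw [hc]
      simp [Equiv.Perm.mul_apply, Equiv.swap_apply_left,
        Equiv.swap_apply_of_ne_of_ne (Ne.symm hac) (Ne.symm hbc)]
    set π : Equiv.Perm (Fin q) := if Even l then 1 else Equiv.swap a b with hπ
    set i0 : Fin l := ⟨0, hl⟩ with hi0
    refine ⟨fun i k => π k, ⟨fun _ => π, fun i => rfl, ?_⟩,
      fun i k => (if i = i0 then π * c else π) k,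
      ⟨fun i => if i = i0 then π * c else π, fun i => rfl, ?_⟩, ?_, ?_⟩
    · by_cases hEl : Even l
      · have : π = 1 := by rw [hπ, if_pos hEl]
        simp [this]
        exact hEl
      · have hπs : Equiv.Perm.sign π = -1 := by
          rw [hπ, if_neg hEl, Equiv.Perm.sign_swap hab]
        simp [hπs]
    · have hs : ∀ i : Fin l, Equiv.Perm.sign (if i = i0 then π * c else π)
          = Equiv.Perm.sign π := by
        intro i
        split_ifs with hi
        · rw [map_mul, hsc, mul_one]
        · rfl
      simp only [hs]
      by_cases hEl : Even l
      · have : π = 1 := by rw [hπ, if_pos hEl]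
        simp [this]
        exact hEl
      · have hπs : Equiv.Perm.sign π = -1 := by
          rw [hπ, if_neg hEl, Equiv.Perm.sign_swap hab]
        simp [hπs]
    · intro heq
      have h1 := congrFun (congrFun heq i0) b
      simp only [if_pos rfl] at h1
      have h2 : π b = π (c b) := h1
      have h3 : b = c b := π.injective h2
      rw [hcb] at h3
      exact hbc h3
    · have hmain : (fun k => ((π * c : Equiv.Perm (Fin q))) k) =
          (fun k => (π : Equiv.Perm (Fin q)) (c k)) := rfl
      unfold prodDist
      rw [Finset.sum_eq_single i0]
      · simp only [eq_self_iff_true, if_true]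
        rw [show hammingDist (fun k => π k) (fun k => (π * c) k)
            = ((π * c)⁻¹ * π).support.card from ham_eq π (π * c)]
        have : (π * c)⁻¹ * π = c⁻¹ := by group
        rw [this, Equiv.Perm.support_inv, hcard3]
      · intro j _ hj
        simp only [if_neg hj]
        exact hammingDist_self _
      · intro hmem
        exact absurd (Finset.mem_univ i0) hmem
end

section
/- For q ≥ 4, every codeword of C(A_q) is at Hamming distance exactly q−1 from every codeword of the repetition code Rep(q,q); consequently C(A_q) ∪ Rep(q,q) has minimum distance 3 and Γ₁(C(A_q) ∪ Rep(q,q)) = Γ₁(C(A_q)) ∪ Γ₁(Rep(q,q)). -/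
/-- The repetition code `Rep(q,q)` in `H(q,q)`. -/
def repCode (q : ℕ) : Set (Fin q → Fin q) :=
  {v | ∃ a : Fin q, v = fun _ => a}

/-!
The word `α(g)` agrees with a constant word in exactly one coordinate, so its distance to
`Rep(q,q)` is `q - 1 ≥ 3`. Two words `α(g)`, `α(h)` differ exactly at the points moved by
`h⁻¹ g`, and an even permutation `≠ 1` moves at least three points, since moving exactly two
would make it a transposition. In particular no codeword of one code is a neighbour of the
other code, so the neighbourhood of the union splits.
-/

open Finset Equiv

section Hamming

variable {α : Type*} [Fintype α] [DecidableEq α]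

theorem hammingDist_perm_one (σ : Perm α) : hammingDist ⇑σ ⇑(1 : Perm α) = #σ.support :=
  rfl

theorem hammingDist_perm_perm (g h : Perm α) : hammingDist ⇑g ⇑h = #(h⁻¹ * g).support := by
  rw [← hammingDist_perm_one, ← hammingDist_comp (fun _ => ⇑h⁻¹) fun _ => h⁻¹.injective]
  simp only [Perm.coe_inv, symm_apply_apply]
  rfl

theorem hammingDist_perm_const (g : Perm α) (a : α) :
    hammingDist ⇑g (fun _ => a) = Fintype.card α - 1 := by
  have hdiff : ({i | g i ≠ a} : Finset α) = univ.erase (g.symm a) := by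
    ext i
    simp [← Equiv.eq_symm_apply]
  rw [hammingDist, hdiff, card_erase_of_mem (mem_univ _), card_univ]

theorem hammingDist_const_const {ι β : Type*} [Fintype ι] [DecidableEq β] {a b : β}
    (hab : a ≠ b) :
    hammingDist (fun _ : ι => a) (fun _ => b) = Fintype.card ι := by
  simp [hammingDist, hab]

end Hamming

theorem Equiv.Perm.three_le_card_support_of_mem_alternatingGroup {α : Type*} [Fintype α]
    [DecidableEq α] {σ : Perm α} (hσ : σ ∈ alternatingGroup α) (hσ1 : σ ≠ 1) :
    3 ≤ #σ.support := by
  have hne : #σ.support ≠ 2 := fun h2 => by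
    have hsign := (card_support_eq_two.mp h2).sign_eq
    rw [mem_alternatingGroup.mp hσ] at hsign
    exact absurd hsign (by decide)
  have := one_lt_card_support_of_ne_one hσ1
  omega

theorem codeNbrs_union {m q : ℕ} {C D : Set (Fin m → Fin q)}
    (hCD : ∀ c ∈ C, ∀ d ∈ D, hammingDist c d ≠ 1) :
    codeNbrs (C ∪ D) = codeNbrs C ∪ codeNbrs D := by
  ext v
  constructor
  · rintro ⟨hv, c, hc | hc, hd⟩
    · exact Or.inl ⟨fun h => hv (Or.inl h), c, hc, hd⟩
    · exact Or.inr ⟨fun h => hv (Or.inr h), c, hc, hd⟩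
  · rintro (⟨hv, c, hc, hd⟩ | ⟨hv, c, hc, hd⟩)
    · refine ⟨fun h => h.elim hv fun hvD => ?_, c, Or.inl hc, hd⟩
      exact hCD c hc v hvD (hammingDist_comm c v ▸ hd)
    · exact ⟨fun h => h.elim (fun hvC => hCD v hvC c hc hd) hv, c, Or.inr hc, hd⟩

section AlternatingCode

variable {q : ℕ}

theorem three_le_hammingDist_of_mem_permCode_alternatingGroup_union_repCode (hq : 4 ≤ q)
    {u v : Fin q → Fin q}
    (hu : u ∈ permCode (alternatingGroup (Fin q) : Set (Perm (Fin q))) ∪ repCode q)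
    (hv : v ∈ permCode (alternatingGroup (Fin q) : Set (Perm (Fin q))) ∪ repCode q)
    (huv : u ≠ v) : 3 ≤ hammingDist u v := by
  rcases hu with ⟨g, hg, rfl⟩ | ⟨a, rfl⟩ <;> rcases hv with ⟨h, hh, rfl⟩ | ⟨b, rfl⟩
  · rw [hammingDist_perm_perm]
    refine Perm.three_le_card_support_of_mem_alternatingGroup (mul_mem (inv_mem hh) hg) ?_
    intro hgh
    exact huv (by rw [inv_mul_eq_one.mp hgh])
  · rw [hammingDist_perm_const, Fintype.card_fin]; omega
  · rw [hammingDist_comm, hammingDist_perm_const, Fintype.card_fin]; omega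
  · rw [hammingDist_const_const fun hab => huv (by rw [hab]), Fintype.card_fin]; omega

theorem exists_mem_permCode_alternatingGroup_hammingDist_eq_three (hq : 3 ≤ q) :
    ∃ u ∈ permCode (alternatingGroup (Fin q) : Set (Perm (Fin q))),
      ∃ v ∈ permCode (alternatingGroup (Fin q) : Set (Perm (Fin q))), hammingDist u v = 3 := by
  obtain ⟨n, rfl⟩ : ∃ n, q = n + 3 := ⟨q - 3, by omega⟩
  have h3 := Fin.isThreeCycle_cycleRange_two (n := n)
  exact ⟨_, ⟨_, h3.mem_alternatingGroup, rfl⟩, _, ⟨1, one_mem _, rfl⟩,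
    by rw [hammingDist_perm_one, h3.card_support]⟩

end AlternatingCode

/-- For `q ≥ 4`: every codeword of `C(A_q)` is at Hamming distance exactly `q - 1` from
every codeword of `Rep(q,q)`; consequently `C(A_q) ∪ Rep(q,q)` has minimum distance 3 and
`Γ₁(C(A_q) ∪ Rep(q,q)) = Γ₁(C(A_q)) ∪ Γ₁(Rep(q,q))`. -/
theorem stmt18 (q : ℕ) (hq : 4 ≤ q) :
    (∀ g ∈ alternatingGroup (Fin q), ∀ a : Fin q,
        hammingDist (fun i => g i) (fun _ => a) = q - 1) ∧
    (∀ u ∈ permCode (alternatingGroup (Fin q) : Set (Equiv.Perm (Fin q))) ∪ repCode q,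
        ∀ v ∈ permCode (alternatingGroup (Fin q) : Set (Equiv.Perm (Fin q))) ∪ repCode q,
          u ≠ v → 3 ≤ hammingDist u v) ∧
    (∃ u ∈ permCode (alternatingGroup (Fin q) : Set (Equiv.Perm (Fin q))) ∪ repCode q,
        ∃ v ∈ permCode (alternatingGroup (Fin q) : Set (Equiv.Perm (Fin q))) ∪ repCode q,
          u ≠ v ∧ hammingDist u v = 3) ∧
    codeNbrs (permCode (alternatingGroup (Fin q) : Set (Equiv.Perm (Fin q))) ∪ repCode q)
      = codeNbrs (permCode (alternatingGroup (Fin q) : Set (Equiv.Perm (Fin q))))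
        ∪ codeNbrs (repCode q) := by
  have hdist : ∀ g ∈ alternatingGroup (Fin q), ∀ a : Fin q,
      hammingDist (fun i => g i) (fun _ => a) = q - 1 := fun g _ a => by
    rw [hammingDist_perm_const, Fintype.card_fin]
  obtain ⟨u, hu, v, hv, huv⟩ := exists_mem_permCode_alternatingGroup_hammingDist_eq_three
    (by omega : 3 ≤ q)
  refine ⟨hdist, fun u hu v hv =>
      three_le_hammingDist_of_mem_permCode_alternatingGroup_union_repCode hq hu hv,
    ⟨u, Or.inl hu, v, Or.inl hv, hammingDist_ne_zero.mp (by omega), huv⟩, codeNbrs_union ?_⟩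
  rintro _ ⟨g, hg, rfl⟩ _ ⟨a, rfl⟩
  rw [hdist g hg a]
  omega
end

section
/- There is no elusive pair with parameters (4,3,3): for every code C ⊆ H(4,3) with minimum distance 3, any subgroup X ≤ Aut(H(4,3)) that fixes Γ₁(C) setwise also fixes C setwise. -/
open Function Finset

namespace ElusivePair

section Hamming

variable {ι α : Type*} [Fintype ι] [DecidableEq α]

def relabel (g : ι → α → α) (π : Equiv.Perm ι) (x : ι → α) : ι → α := fun m => g m (x (π m))

theorem hammingDist_comp_perm (π : Equiv.Perm ι) (u v : ι → α) :
    hammingDist (u ∘ π) (v ∘ π) = hammingDist u v :=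
  card_equiv π (by simp)

theorem hammingDist_relabel {g : ι → α → α} (hg : ∀ m, Injective (g m)) (π : Equiv.Perm ι)
    (u v : ι → α) : hammingDist (relabel g π u) (relabel g π v) = hammingDist u v :=
  (hammingDist_comp g hg).trans (hammingDist_comp_perm π u v)

theorem bijective_of_hammingDist_eq [Finite α] {F : (ι → α) → ι → α}
    (hF : ∀ u v, hammingDist (F u) (F v) = hammingDist u v) : Bijective F := by
  have hinj : Injective F := fun u v h => by
    rw [← hammingDist_eq_zero, ← hF, h, hammingDist_self]
  exact ⟨hinj, Finite.injective_iff_surjective.mp hinj⟩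

theorem hammingDist_le_one_of_eq_of_ne {x y : ι → α} {i : ι} (h : ∀ m, m ≠ i → x m = y m) :
    hammingDist x y ≤ 1 :=
  card_le_one.2 fun a ha b hb => by
    simp only [mem_filter, mem_univ, true_and] at ha hb
    rw [not_imp_comm.1 (h a) ha, not_imp_comm.1 (h b) hb]

theorem hammingDist_update_self [DecidableEq ι] {x : ι → α} {i : ι} {b : α} (hb : b ≠ x i) :
    hammingDist (update x i b) x = 1 := by
  refine le_antisymm (hammingDist_le_one_of_eq_of_ne fun m hm => update_of_ne hm b x) ?_
  refine Nat.one_le_iff_ne_zero.2 (hammingDist_ne_zero.2 fun h => hb ?_)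
  simpa using congrFun h i

theorem hammingDist_update_apply_add_one [DecidableEq ι] {x y : ι → α} {i : ι}
    (h : x i ≠ y i) : hammingDist (update x i (y i)) y + 1 = hammingDist x y := by
  unfold hammingDist
  rw [← card_insert_of_notMem (a := i) (by simp)]
  congr 1
  ext m
  by_cases hm : m = i
  · subst hm; simpa using h
  · simp [hm]

theorem card_filter_ne_inter_filter_ne_eq_one [DecidableEq ι] {c w w' : ι → α}
    (h₁ : hammingDist c w = 2) (h₂ : hammingDist c w' = 2) (h₃ : hammingDist w w' = 3) :
    #(({m | c m ≠ w m} : Finset ι) ∩ ({m | c m ≠ w' m} : Finset ι)) = 1 := by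
  set A := ({m | c m ≠ w m} : Finset ι)
  set B := ({m | c m ≠ w' m} : Finset ι)
  set D := ({m | w m ≠ w' m} : Finset ι)
  have hD_sub : D ⊆ A ∪ B := fun m => by
    simp only [A, B, D, mem_union, mem_filter, mem_univ, true_and]
    grind
  have hAB_sub : A ∩ B = ∅ → A ∪ B ⊆ D := fun h m => by
    have : m ∉ A ∩ B := by simp [h]
    simp only [A, B, D, mem_union, mem_inter, mem_filter, mem_univ, true_and] at this ⊢
    grind
  have hunion := card_union_add_card_inter A B
  have hA : #A = 2 := h₁
  have hB : #B = 2 := h₂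
  have hD : #D = 3 := h₃
  have := card_le_card hD_sub
  rcases (A ∩ B).eq_empty_or_nonempty with h | h
  · have := card_le_card (hAB_sub h)
    simp only [h, card_empty] at hunion
    omega
  · have := h.card_pos
    omega

theorem exists_coords_of_hammingDist [DecidableEq ι] {c w w' : ι → α}
    (h₁ : hammingDist c w = 2) (h₂ : hammingDist c w' = 2) (h₃ : hammingDist w w' = 3) :
    ∃ i j k, j ≠ i ∧ k ≠ i ∧ k ≠ j ∧ c i ≠ w i ∧ c i ≠ w' i ∧ w i ≠ w' i ∧
      c j ≠ w j ∧ c j = w' j ∧ c k = w k ∧ c k ≠ w' k ∧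
      ∀ l, l ≠ i → l ≠ j → l ≠ k → c l = w l ∧ c l = w' l := by
  set A := ({m | c m ≠ w m} : Finset ι)
  set B := ({m | c m ≠ w' m} : Finset ι)
  obtain ⟨i, hi⟩ := card_eq_one.1 (card_filter_ne_inter_filter_ne_eq_one h₁ h₂ h₃)
  have hiA : i ∈ A := (mem_inter.1 (hi ▸ mem_singleton_self i)).1
  have hiB : i ∈ B := (mem_inter.1 (hi ▸ mem_singleton_self i)).2
  obtain ⟨j, hj⟩ := card_eq_one.1 (by rw [card_erase_of_mem hiA]; exact congrArg (· - 1) h₁)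
  obtain ⟨k, hk⟩ := card_eq_one.1 (by rw [card_erase_of_mem hiB]; exact congrArg (· - 1) h₂)
  have hji : j ≠ i := ne_of_mem_erase (hj ▸ mem_singleton_self j)
  have hki : k ≠ i := ne_of_mem_erase (hk ▸ mem_singleton_self k)
  have hA : ∀ m, c m ≠ w m ↔ m = i ∨ m = j := fun m => by
    simpa [A] using congrArg (m ∈ ·) (show A = {i, j} by rw [← insert_erase hiA, hj])
  have hB : ∀ m, c m ≠ w' m ↔ m = i ∨ m = k := fun m => by
    simpa [B] using congrArg (m ∈ ·) (show B = {i, k} by rw [← insert_erase hiB, hk])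
  have hAB : ∀ m, c m ≠ w m ∧ c m ≠ w' m ↔ m = i := fun m => by
    simpa [A, B] using congrArg (m ∈ ·) hi
  have hkj : k ≠ j := fun h => hji ((hAB j).1 ⟨(hA j).2 (.inr rfl), (hB j).2 (.inr h.symm)⟩)
  have hwi : w i ≠ w' i := fun h => by
    have : ({m | w m ≠ w' m} : Finset ι) ⊆ {j, k} := fun m hm => by
      simp only [mem_filter, mem_univ, true_and] at hm
      simp only [mem_insert, mem_singleton]
      grind
    have hD : #({m | w m ≠ w' m} : Finset ι) = 3 := h₃
    have := (card_le_card this).trans card_le_two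
    omega
  refine ⟨i, j, k, hji, hki, hkj, (hA i).2 (.inl rfl), (hB i).2 (.inl rfl), hwi,
    (hA j).2 (.inr rfl), ?_, ?_, (hB k).2 (.inr rfl), fun l hli hlj hlk => ?_⟩ <;> grind

end Hamming

section Reconstruction

variable {ι α : Type*} [Fintype ι] [DecidableEq α] [Finite α]

def enclosedBy (S : Set (ι → α)) : Set (ι → α) := {v | ∀ u, hammingDist u v = 1 → u ∈ S}

def HasFarPair (T : Set (ι → α)) (v : ι → α) : Prop :=
  ∃ w ∈ T, ∃ w' ∈ T, hammingDist v w = 2 ∧ hammingDist v w' = 2 ∧ hammingDist w w' = 3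

def codeOfNbrs (S : Set (ι → α)) : Set (ι → α) :=
  {v | v ∈ enclosedBy S ∧ ¬ HasFarPair (enclosedBy S) v}

theorem preimage_enclosedBy {F : (ι → α) → ι → α}
    (hF : ∀ u v, hammingDist (F u) (F v) = hammingDist u v) (S : Set (ι → α)) :
    F ⁻¹' enclosedBy S = enclosedBy (F ⁻¹' S) := by
  ext x
  change (∀ u, _) ↔ ∀ u, _
  rw [(bijective_of_hammingDist_eq hF).2.forall]
  simp only [hF, Set.mem_preimage]

theorem hasFarPair_preimage_iff {F : (ι → α) → ι → α}
    (hF : ∀ u v, hammingDist (F u) (F v) = hammingDist u v) (T : Set (ι → α)) (v : ι → α) :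
    HasFarPair (F ⁻¹' T) v ↔ HasFarPair T (F v) := by
  constructor
  · rintro ⟨w, hw, w', hw', h⟩
    exact ⟨F w, hw, F w', hw', by simpa only [hF] using h⟩
  · rintro ⟨w, hw, w', hw', h⟩
    obtain ⟨w, rfl⟩ := (bijective_of_hammingDist_eq hF).2 w
    obtain ⟨w', rfl⟩ := (bijective_of_hammingDist_eq hF).2 w'
    exact ⟨w, hw, w', hw', by simpa only [hF] using h⟩

theorem preimage_codeOfNbrs {F : (ι → α) → ι → α}
    (hF : ∀ u v, hammingDist (F u) (F v) = hammingDist u v) (S : Set (ι → α)) :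
    F ⁻¹' codeOfNbrs S = codeOfNbrs (F ⁻¹' S) := by
  ext x
  simp only [codeOfNbrs, Set.mem_preimage, Set.mem_ofPred_eq, ← preimage_enclosedBy hF,
    hasFarPair_preimage_iff hF]

end Reconstruction

section Code

variable {m q : ℕ} {C : Set (Fin m → Fin q)}

theorem preimage_codeNbrs {F : (Fin m → Fin q) → Fin m → Fin q}
    (hF : ∀ u v, hammingDist (F u) (F v) = hammingDist u v) :
    F ⁻¹' codeNbrs C = codeNbrs (F ⁻¹' C) := by
  ext x
  constructor
  · rintro ⟨hx, c, hc, hxc⟩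
    obtain ⟨c, rfl⟩ := (bijective_of_hammingDist_eq hF).2 c
    exact ⟨hx, c, hc, by rwa [← hF]⟩
  · rintro ⟨hx, c, hc, hxc⟩
    exact ⟨hx, F c, hc, by rwa [hF]⟩

theorem two_le_hammingDist_of_mem_enclosedBy {v e : Fin m → Fin q}
    (hv : v ∈ enclosedBy (codeNbrs C)) (hvC : v ∉ C) (he : e ∈ C) : 2 ≤ hammingDist v e := by
  by_contra! h
  interval_cases hve : hammingDist v e
  · exact hvC (hammingDist_eq_zero.1 hve ▸ he)
  · exact (hv e (by rwa [hammingDist_comm])).1 he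

theorem exists_mem_hammingDist_eq_two {v : Fin m → Fin q} (hv : v ∈ enclosedBy (codeNbrs C))
    (hvC : v ∉ C) (i : Fin m) {a : Fin q} (ha : a ≠ v i) :
    ∃ e ∈ C, hammingDist v e = 2 ∧ e i = a := by
  obtain ⟨-, e, he, hue⟩ := hv (update v i a) (hammingDist_update_self ha)
  refine ⟨e, he, le_antisymm ?_ (two_le_hammingDist_of_mem_enclosedBy hv hvC he), ?_⟩
  · calc hammingDist v e ≤ hammingDist v (update v i a) + hammingDist (update v i a) e :=
          hammingDist_triangle _ _ _
      _ = 2 := by rw [hammingDist_comm, hammingDist_update_self ha, hue]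
  · by_contra hea
    have hupd := hammingDist_update_apply_add_one (x := update v i a) (i := i)
      (by simpa using Ne.symm hea)
    rw [hue, Nat.add_eq_right, hammingDist_eq_zero, update_idem] at hupd
    have : hammingDist v e ≤ 1 :=
      hupd ▸ hammingDist_le_one_of_eq_of_ne fun m hm => (update_of_ne hm _ v).symm
    have := two_le_hammingDist_of_mem_enclosedBy hv hvC he
    omega

theorem mem_enclosedBy_codeNbrs (hmin : ∀ u ∈ C, ∀ v ∈ C, u ≠ v → 3 ≤ hammingDist u v)
    {c : Fin m → Fin q} (hc : c ∈ C) : c ∈ enclosedBy (codeNbrs C) := fun u hu =>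
  ⟨fun huC => by
    have := hmin u huC c hc (by rintro rfl; simp at hu)
    omega, c, hc, hu⟩

theorem hasFarPair_of_notMem (hmin : ∀ u ∈ C, ∀ v ∈ C, u ≠ v → 3 ≤ hammingDist u v)
    (hq : 3 ≤ q) (hm : 0 < m) {v : Fin m → Fin q} (hv : v ∈ enclosedBy (codeNbrs C))
    (hvC : v ∉ C) : HasFarPair (enclosedBy (codeNbrs C)) v := by
  set i : Fin m := ⟨0, hm⟩
  obtain ⟨a, ha, b, hb, hab⟩ := (one_lt_card (s := univ.erase (v i))).1 (by
    rw [card_erase_of_mem (mem_univ _), card_univ, Fintype.card_fin]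
    omega)
  obtain ⟨e, he, hve, rfl⟩ := exists_mem_hammingDist_eq_two hv hvC i (ne_of_mem_erase ha)
  obtain ⟨e', he', hve', rfl⟩ := exists_mem_hammingDist_eq_two hv hvC i (ne_of_mem_erase hb)
  have hnear : ∀ {e}, hammingDist v e = 2 → e i ≠ v i → hammingDist (update v i (e i)) e = 1 :=
    fun hve hne => by have := hammingDist_update_apply_add_one (Ne.symm hne); omega
  refine ⟨e, mem_enclosedBy_codeNbrs hmin he, e', mem_enclosedBy_codeNbrs hmin he', hve, hve',
    le_antisymm ?_ (hmin e he e' he' fun h => hab (congrFun h i))⟩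
  calc hammingDist e e'
      ≤ hammingDist e (update v i (e i)) + hammingDist (update v i (e i)) e' :=
        hammingDist_triangle _ _ _
    _ ≤ hammingDist e (update v i (e i)) + (hammingDist (update v i (e i)) (update v i (e' i))
          + hammingDist (update v i (e' i)) e') := by gcongr; exact hammingDist_triangle _ _ _
    _ ≤ 1 + (1 + 1) := by
      gcongr
      · rw [hammingDist_comm, hnear hve (ne_of_mem_erase ha)]
      · exact hammingDist_le_one_of_eq_of_ne (i := i) fun j hj => by simp [update_of_ne hj]
      · rw [hnear hve' (ne_of_mem_erase hb)]

end Code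

section FourThree

variable {C : Set (Fin 4 → Fin 3)}

theorem fin_three_sub_mul_self_of_ne : ∀ a b : Fin 3, a ≠ b → (a - b) * (a - b) = 1 := by
  decide

theorem fin_three_sub_mul_sub_of_ne :
    ∀ a b c : Fin 3, a ≠ b → a ≠ c → b ≠ c → (a - b) * (c - b) = 2 := by
  decide

theorem fin_three_injective_mul_sub : ∀ δ a : Fin 3, δ ≠ 0 → Injective fun x => δ * (x - a) := by
  decide

theorem exists_isometry_normalForm {c w w' : Fin 4 → Fin 3} (h₁ : hammingDist c w = 2)
    (h₂ : hammingDist c w' = 2) (h₃ : hammingDist w w' = 3) :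
    ∃ F : (Fin 4 → Fin 3) → Fin 4 → Fin 3, (∀ u v, hammingDist (F u) (F v) = hammingDist u v) ∧
      F c = ![1, 1, 0, 0] ∧ F w = ![0, 0, 0, 0] ∧ F w' = ![2, 1, 1, 0] := by
  obtain ⟨i, j, k, hji, hki, hkj, hi, hi', hwi, hj, hj', hk, hk', hrest⟩ :=
    exists_coords_of_hammingDist h₁ h₂ h₃
  obtain ⟨l, hli, hlj, hlk⟩ :=
    (by decide : ∀ i j k : Fin 4, ∃ l, l ≠ i ∧ l ≠ j ∧ l ≠ k) i j k
  obtain ⟨hl, hl'⟩ := hrest l hli hlj hlk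
  have hπ : Injective ![i, j, k, l] := by
    intro a b h
    fin_cases a <;> fin_cases b <;> simp at h <;> grind
  let π := Equiv.ofBijective _ (Finite.injective_iff_bijective.1 hπ)
  -- `x * x = 1` for nonzero `x : Fin 3`, so scaling by `δ` turns the differences to `w` into `1`
  let δ : Fin 4 → Fin 3 := ![c i - w i, c j - w j, w' k - w k, 1]
  have hδ : ∀ m, δ m ≠ 0 := by
    intro m
    fin_cases m <;> simp [δ, sub_eq_zero, hi, hj, Ne.symm (hk ▸ hk')]
  refine ⟨relabel (fun m x => δ m * (x - w (π m))) π,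
    hammingDist_relabel (fun m => fin_three_injective_mul_sub _ _ (hδ m)) π, ?_, ?_, ?_⟩ <;>
  · funext m
    fin_cases m <;> simp [relabel, π, δ, hk, hl, ← hj', ← hl',
      fin_three_sub_mul_self_of_ne _ _ hi, fin_three_sub_mul_self_of_ne _ _ hj,
      fin_three_sub_mul_self_of_ne _ _ (Ne.symm (hk ▸ hk')),
      fin_three_sub_mul_sub_of_ne _ _ _ hi hi' hwi]

/- In the normal form `c = 1100`, `w = 0000`, `w' = 2110`, the codewords `e₁, e₂` cover the
neighbours of `w` changed to `1` in coordinates `2, 3`, and `e₃, e₄` the neighbours of `w'`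
changed to `0` in coordinate `1` and to `1` in coordinate `3`. -/
set_option synthInstance.maxSize 1000 in
set_option maxRecDepth 100000 in
theorem normalForm_covers_clash : ∀ e₁ : Fin 4 → Fin 3,
    e₁ 2 = 1 → hammingDist ![0, 0, 0, 0] e₁ = 2 → 2 ≤ hammingDist ![2, 1, 1, 0] e₁ →
    (![1, 1, 0, 0] = e₁ ∨ 3 ≤ hammingDist ![1, 1, 0, 0] e₁) →
    ∀ e₂ : Fin 4 → Fin 3, e₂ 3 = 1 → hammingDist ![0, 0, 0, 0] e₂ = 2 →
    2 ≤ hammingDist ![2, 1, 1, 0] e₂ →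
    (![1, 1, 0, 0] = e₂ ∨ 3 ≤ hammingDist ![1, 1, 0, 0] e₂) → (e₁ = e₂ ∨ 3 ≤ hammingDist e₁ e₂) →
    ∀ e₃ : Fin 4 → Fin 3, e₃ 1 = 0 → hammingDist ![2, 1, 1, 0] e₃ = 2 →
    2 ≤ hammingDist ![0, 0, 0, 0] e₃ →
    (![1, 1, 0, 0] = e₃ ∨ 3 ≤ hammingDist ![1, 1, 0, 0] e₃) → (e₁ = e₃ ∨ 3 ≤ hammingDist e₁ e₃) →
    (e₂ = e₃ ∨ 3 ≤ hammingDist e₂ e₃) →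
    ∀ e₄ : Fin 4 → Fin 3, e₄ 3 = 1 → hammingDist ![2, 1, 1, 0] e₄ = 2 →
    2 ≤ hammingDist ![0, 0, 0, 0] e₄ →
    (![1, 1, 0, 0] = e₄ ∨ 3 ≤ hammingDist ![1, 1, 0, 0] e₄) → (e₁ = e₄ ∨ 3 ≤ hammingDist e₁ e₄) →
    (e₂ = e₄ ∨ 3 ≤ hammingDist e₂ e₄) → ¬ (e₃ = e₄ ∨ 3 ≤ hammingDist e₃ e₄) := by
  decide

theorem false_of_normalForm (hmin : ∀ u ∈ C, ∀ v ∈ C, u ≠ v → 3 ≤ hammingDist u v)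
    (hc : ![1, 1, 0, 0] ∈ C) (hw : ![0, 0, 0, 0] ∈ enclosedBy (codeNbrs C))
    (hw' : ![2, 1, 1, 0] ∈ enclosedBy (codeNbrs C)) : False := by
  have hwC : ![0, 0, 0, 0] ∉ C := fun h => absurd (hmin _ hc _ h (by decide)) (by decide)
  have hw'C : ![2, 1, 1, 0] ∉ C := fun h => absurd (hmin _ hc _ h (by decide)) (by decide)
  have far := fun {e} => two_le_hammingDist_of_mem_enclosedBy (e := e) hw hwC
  have far' := fun {e} => two_le_hammingDist_of_mem_enclosedBy (e := e) hw' hw'C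
  have apart : ∀ {x y}, x ∈ C → y ∈ C → x = y ∨ 3 ≤ hammingDist x y := fun hx hy =>
    or_iff_not_imp_left.2 (hmin _ hx _ hy)
  obtain ⟨e₁, he₁, hd₁, hv₁⟩ := exists_mem_hammingDist_eq_two hw hwC 2 (a := 1) (by decide)
  obtain ⟨e₂, he₂, hd₂, hv₂⟩ := exists_mem_hammingDist_eq_two hw hwC 3 (a := 1) (by decide)
  obtain ⟨e₃, he₃, hd₃, hv₃⟩ := exists_mem_hammingDist_eq_two hw' hw'C 1 (a := 0) (by decide)
  obtain ⟨e₄, he₄, hd₄, hv₄⟩ := exists_mem_hammingDist_eq_two hw' hw'C 3 (a := 1) (by decide)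
  exact normalForm_covers_clash e₁ hv₁ hd₁ (far' he₁) (apart hc he₁)
    e₂ hv₂ hd₂ (far' he₂) (apart hc he₂) (apart he₁ he₂)
    e₃ hv₃ hd₃ (far he₃) (apart hc he₃) (apart he₁ he₃) (apart he₂ he₃)
    e₄ hv₄ hd₄ (far he₄) (apart hc he₄) (apart he₁ he₄) (apart he₂ he₄) (apart he₃ he₄)

theorem not_hasFarPair_of_mem (hmin : ∀ u ∈ C, ∀ v ∈ C, u ≠ v → 3 ≤ hammingDist u v)
    {c : Fin 4 → Fin 3} (hc : c ∈ C) : ¬ HasFarPair (enclosedBy (codeNbrs C)) c := by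
  rintro ⟨w, hw, w', hw', h₁, h₂, h₃⟩
  obtain ⟨F, hF, hFc, hFw, hFw'⟩ := exists_isometry_normalForm h₁ h₂ h₃
  have hpre : F ⁻¹' (F '' C) = C := Set.preimage_image_eq C (bijective_of_hammingDist_eq hF).1
  have hmap : ∀ x ∈ enclosedBy (codeNbrs C), F x ∈ enclosedBy (codeNbrs (F '' C)) := by
    intro x hx
    rwa [← Set.mem_preimage, preimage_enclosedBy hF, preimage_codeNbrs hF, hpre]
  refine false_of_normalForm (C := F '' C) ?_ (hFc ▸ Set.mem_image_of_mem F hc) (hFw ▸ hmap w hw)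
    (hFw' ▸ hmap w' hw')
  rintro _ ⟨u, hu, rfl⟩ _ ⟨v, hv, rfl⟩ huv
  rw [hF]
  exact hmin u hu v hv (fun h => huv (h ▸ rfl))

theorem codeOfNbrs_codeNbrs (hmin : ∀ u ∈ C, ∀ v ∈ C, u ≠ v → 3 ≤ hammingDist u v) :
    codeOfNbrs (codeNbrs C) = C := by
  ext v
  constructor
  · rintro ⟨hv, hfar⟩
    by_contra hvC
    exact hfar (hasFarPair_of_notMem hmin le_rfl (by norm_num) hv hvC)
  · intro hv
    exact ⟨mem_enclosedBy_codeNbrs hmin hv, not_hasFarPair_of_mem hmin hv⟩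

end FourThree

end ElusivePair

open ElusivePair in
theorem stmt19_general (C : Set (Fin 4 → Fin 3))
    (hmin : ∀ u ∈ C, ∀ v ∈ C, u ≠ v → 3 ≤ hammingDist u v)
    (f : Fin 4 → Equiv.Perm (Fin 3)) (σ : Equiv.Perm (Fin 4))
    (hfix : (fun v : Fin 4 → Fin 3 => fun i => f (σ⁻¹ i) (v (σ⁻¹ i))) '' codeNbrs C
      = codeNbrs C) :
    (fun v : Fin 4 → Fin 3 => fun i => f (σ⁻¹ i) (v (σ⁻¹ i))) '' C = C := by
  set F := fun v : Fin 4 → Fin 3 => fun i => f (σ⁻¹ i) (v (σ⁻¹ i))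
  have hF : ∀ u v, hammingDist (F u) (F v) = hammingDist u v :=
    hammingDist_relabel (g := fun i => f (σ⁻¹ i)) (fun i => (f _).injective) σ⁻¹
  have hbij := bijective_of_hammingDist_eq hF
  have hnbrs : F ⁻¹' codeNbrs C = codeNbrs C := by
    conv_lhs => rw [← hfix]
    exact Set.preimage_image_eq _ hbij.1
  have hpre : F ⁻¹' C = C := by
    conv_lhs => rw [← codeOfNbrs_codeNbrs hmin]
    rw [preimage_codeOfNbrs hF, hnbrs, codeOfNbrs_codeNbrs hmin]
  rw [← hpre, Set.image_preimage_eq _ hbij.2, hpre]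

/-- There is no elusive pair with parameters `(4,3,3)`: for any code `C ⊆ H(4,3)` of
minimum distance 3, every automorphism of `H(4,3)` (given by alphabet permutations
`f i` in each coordinate followed by a permutation `σ` of coordinates) that fixes
`Γ₁(C)` setwise also fixes `C` setwise. -/
theorem stmt19 (C : Set (Fin 4 → Fin 3))
    (hmin : ∀ u ∈ C, ∀ v ∈ C, u ≠ v → 3 ≤ hammingDist u v)
    (hex : ∃ u ∈ C, ∃ v ∈ C, u ≠ v ∧ hammingDist u v = 3)
    (f : Fin 4 → Equiv.Perm (Fin 3)) (σ : Equiv.Perm (Fin 4))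
    (hfix : (fun v : Fin 4 → Fin 3 => fun i => f (σ⁻¹ i) (v (σ⁻¹ i))) '' codeNbrs C
      = codeNbrs C) :
    (fun v : Fin 4 → Fin 3 => fun i => f (σ⁻¹ i) (v (σ⁻¹ i))) '' C = C :=
  stmt19_general C hmin f σ hfix
end
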